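/- arXiv:2202.02853 — 6 statements merged into one kernel-verified Lean document; each statement's English description precedes it below -/
import Mathlib

section
/- Let a, b ∈ ℝ with b² ≠ 1 and let n ≥ 1. Let A and B be the n×n matrices with entries A_{ij} = a^{|i−j|} and B_{ij} = b^{|i−j|} (indices 1 ≤ i, j ≤ n). Then B is invertible and tr(B⁻¹·A) = ( (n−2)·b² − 2(n−1)·a·b + n ) / (1 − b²). -/
/-!
The matrix `T = (1 - b²) B⁻¹` is the tridiagonal precision matrix of the AR(1) process: diagonal
`(1, 1 + b², …, 1 + b², 1)` and `-b` next to the diagonal. Indeed, along a row of `B` the entries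
`b^|i-k|` are geometric in `k` on either side of the diagonal, so the three-term combination of
them taken by column `j` of `T` vanishes for `j ≠ i` and equals `1 - b²` for `j = i`. Then
`tr(B⁻¹A) = tr(T A)/(1 - b²)`, and `tr(T A)` only sees the diagonal and first off-diagonals of `A`:
it is `n(1 + b²) - 2b² - 2(n - 1)ab`.
-/

open Matrix Finset

variable {R : Type*} [CommRing R]

def kmsMatrix (c : R) (n : ℕ) : Matrix (Fin n) (Fin n) R :=
  of fun i j => c ^ Nat.dist i j

/-- For `n = 1` both boundary corrections hit the single diagonal entry, which becomes `1 - b²`. -/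
def ar1PrecisionEntry (b : R) (n k j : ℕ) : R :=
  (if k = j then 1 + b ^ 2 - (if j = 0 then b ^ 2 else 0) - (if j + 1 = n then b ^ 2 else 0)
    else 0) - (if k + 1 = j then b else 0) - (if k = j + 1 then b else 0)

def ar1Precision (b : R) (n : ℕ) : Matrix (Fin n) (Fin n) R :=
  of fun k j => ar1PrecisionEntry b n k j

lemma sum_mul_ar1Precision (b : R) (f : ℕ → R) {n : ℕ} (j : Fin n) :
    ∑ k : Fin n, f k * ar1Precision b n k j =
      (1 + b ^ 2 - (if (j : ℕ) = 0 then b ^ 2 else 0) - (if (j : ℕ) + 1 = n then b ^ 2 else 0))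
          * f j
        - b * (if (j : ℕ) = 0 then 0 else f (j - 1))
        - b * (if (j : ℕ) + 1 < n then f (j + 1) else 0) := by
  simp only [ar1Precision, of_apply]
  rw [Fin.sum_univ_eq_sum_range (fun k => f k * ar1PrecisionEntry b n k j)]
  have hprev : ∑ k ∈ range n, f k * (if k + 1 = j then b else 0) =
      b * (if (j : ℕ) = 0 then 0 else f (j - 1)) := by
    rcases j with ⟨_ | j, hj⟩
    · simp
    · simp [mem_range.2 (Nat.lt_of_succ_lt hj), mul_comm]
  simp only [ar1PrecisionEntry, mul_sub, sum_sub_distrib, hprev]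
  simp [mul_comm]

lemma kms_row_mul_ar1Precision_col (b : R) {n i j : ℕ} (hi : i < n) (hj : j < n) :
    (1 + b ^ 2 - (if j = 0 then b ^ 2 else 0) - (if j + 1 = n then b ^ 2 else 0))
          * b ^ Nat.dist i j
        - b * (if j = 0 then 0 else b ^ Nat.dist i (j - 1))
        - b * (if j + 1 < n then b ^ Nat.dist i (j + 1) else 0) =
      if i = j then 1 - b ^ 2 else 0 := by
  rcases lt_trichotomy i j with h | rfl | h
  · obtain ⟨d, rfl⟩ := Nat.exists_eq_add_of_lt h
    have h1 : Nat.dist i (i + d + 1) = d + 1 := by unfold Nat.dist; omega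
    have h2 : Nat.dist i (i + d + 1 - 1) = d := by unfold Nat.dist; omega
    have h3 : Nat.dist i (i + d + 1 + 1) = d + 2 := by unfold Nat.dist; omega
    simp only [h1, h2, h3, Nat.add_one_ne_zero, h.ne, if_false]
    rcases (show i + d + 1 + 1 < n ∨ i + d + 1 + 1 = n by omega) with hlt | hlast
    · simp only [hlt, hlt.ne, if_true, if_false]; ring
    · simp only [hlast, lt_irrefl, if_true, if_false]; ring
  · have h1 : Nat.dist i (i - 1) = if i = 0 then 0 else 1 := by
      unfold Nat.dist; split_ifs <;> omega
    have h3 : Nat.dist i (i + 1) = 1 := by unfold Nat.dist; omega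
    simp only [Nat.dist_self, h1, h3]
    split_ifs <;> first | omega | ring
  · obtain ⟨d, rfl⟩ := Nat.exists_eq_add_of_lt h
    have h1 : Nat.dist (j + d + 1) j = d + 1 := by unfold Nat.dist; omega
    have h2 : Nat.dist (j + d + 1) (j - 1) = if j = 0 then d + 1 else d + 2 := by
      unfold Nat.dist; split_ifs <;> omega
    have h3 : Nat.dist (j + d + 1) (j + 1) = d := by unfold Nat.dist; omega
    have hlt : j + 1 < n := by omega
    simp only [h1, h2, h3, hlt, hlt.ne, h.ne', if_true, if_false]
    split_ifs <;> ring

theorem kmsMatrix_mul_ar1Precision (b : R) (n : ℕ) :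
    kmsMatrix b n * ar1Precision b n = (1 - b ^ 2) • (1 : Matrix (Fin n) (Fin n) R) := by
  ext i j
  rw [mul_apply]
  simp only [kmsMatrix, of_apply]
  rw [sum_mul_ar1Precision b (fun k => b ^ Nat.dist i k),
    kms_row_mul_ar1Precision_col b i.isLt j.isLt]
  simp [one_apply, Fin.val_inj]

theorem trace_ar1Precision_mul_kmsMatrix (a b : R) {n : ℕ} (hn : 1 ≤ n) :
    (ar1Precision b n * kmsMatrix a n).trace =
      n * (1 + b ^ 2) - 2 * b ^ 2 - 2 * (n - 1) * a * b := by
  have hdiag (i : Fin n) : (kmsMatrix a n * ar1Precision b n) i i =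
      1 + b ^ 2 - (if (i : ℕ) = 0 then b ^ 2 else 0) - (if (i : ℕ) + 1 = n then b ^ 2 else 0)
        - (if (i : ℕ) = 0 then 0 else a * b) - (if (i : ℕ) + 1 < n then a * b else 0) := by
    have h1 : Nat.dist i (i - 1) = if (i : ℕ) = 0 then 0 else 1 := by
      unfold Nat.dist; split_ifs <;> omega
    have h3 : Nat.dist i (i + 1) = 1 := by unfold Nat.dist; omega
    rw [mul_apply]
    simp only [kmsMatrix, of_apply]
    rw [sum_mul_ar1Precision b (fun k => a ^ Nat.dist i k), Nat.dist_self, h1, h3]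
    split_ifs <;> first | omega | ring
  obtain ⟨m, rfl⟩ := Nat.exists_eq_add_of_le' hn
  rw [trace_mul_comm, trace]
  simp only [diag_apply, hdiag]
  rw [Fin.sum_univ_eq_sum_range (fun i => 1 + b ^ 2 - (if i = 0 then b ^ 2 else 0)
    - (if i + 1 = m + 1 then b ^ 2 else 0) - (if i = 0 then 0 else a * b)
    - (if i + 1 < m + 1 then a * b else 0))]
  have hfirst : ∑ i ∈ range (m + 1), (if i = 0 then 0 else a * b) = m * (a * b) := by
    simp [sum_range_succ']
  have hlast : ∑ i ∈ range (m + 1), (if i + 1 < m + 1 then a * b else 0) = m * (a * b) := by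
    simp [sum_range_succ, sum_ite_of_true]
  simp only [sum_sub_distrib, hfirst, hlast]
  simp
  ring

section Field

variable {K : Type*} [Field K] {b : K}

theorem kmsMatrix_mul_inv_smul_ar1Precision (hb : b ^ 2 ≠ 1) (n : ℕ) :
    kmsMatrix b n * ((1 - b ^ 2)⁻¹ • ar1Precision b n) = 1 := by
  rw [mul_smul_comm, kmsMatrix_mul_ar1Precision, smul_smul,
    inv_mul_cancel₀ (sub_ne_zero.2 hb.symm), one_smul]

theorem isUnit_kmsMatrix (hb : b ^ 2 ≠ 1) (n : ℕ) : IsUnit (kmsMatrix b n) :=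
  IsUnit.of_mul_eq_one _ (kmsMatrix_mul_inv_smul_ar1Precision hb n)

theorem inv_kmsMatrix (hb : b ^ 2 ≠ 1) (n : ℕ) :
    (kmsMatrix b n)⁻¹ = (1 - b ^ 2)⁻¹ • ar1Precision b n :=
  inv_eq_right_inv (kmsMatrix_mul_inv_smul_ar1Precision hb n)

end Field

/-- For the Kac–Murdock–Szegő matrices `A_{ij} = a^|i-j|`,
`B_{ij} = b^|i-j|` with `b² ≠ 1`, the matrix `B` is invertible and
`tr(B⁻¹ A) = ((n-2) b² - 2 (n-1) a b + n)/(1 - b²)`. -/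
theorem trace_kms_inv_mul_kms (a b : ℝ) (hb : b ^ 2 ≠ 1) (n : ℕ) (hn : 1 ≤ n)
    (A B : Matrix (Fin n) (Fin n) ℝ)
    (hA : ∀ i j : Fin n, A i j = a ^ Nat.dist (i : ℕ) (j : ℕ))
    (hB : ∀ i j : Fin n, B i j = b ^ Nat.dist (i : ℕ) (j : ℕ)) :
    IsUnit B ∧
      (B⁻¹ * A).trace =
        (((n : ℝ) - 2) * b ^ 2 - 2 * ((n : ℝ) - 1) * a * b + n) / (1 - b ^ 2) := by
  obtain rfl : A = kmsMatrix a n := ext hA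
  obtain rfl : B = kmsMatrix b n := ext hB
  refine ⟨isUnit_kmsMatrix hb n, ?_⟩
  rw [inv_kmsMatrix hb, smul_mul_assoc, trace_smul, trace_ar1Precision_mul_kmsMatrix a b hn,
    smul_eq_mul, inv_mul_eq_div]
  congr 1
  ring
end

section
/- Let a ∈ ℝ and n ≥ 1. Let L be the n×n lower-triangular matrix with L_{ij} = a^{i−j} for i ≥ j and 0 otherwise, and let U be the n×n upper-triangular matrix with U_{ij} = a^{j−i}·(1 − a²)^{1 − 𝟙{i=1}} for j ≥ i and 0 otherwise (indices 1 ≤ i, j ≤ n; the exponent is 0 when i = 1 and 1 when i ≥ 2). Then L·U equals the matrix Â with entries Â_{ij} = a^{|i−j|}. -/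
/-!
Entry `(i, j)` of `L U` is `∑_{k ≤ min i j} a^(i-k) a^(j-k) c_k` with `c_0 = 1` and
`c_k = 1 - a²` for `k ≥ 1`. For `i ≤ j`, raising `i` by one
multiplies the previous sum by `a` and adds `a^(j-i-1) (1 - a²)`, which turns `a^(j-i)` into
`a^(j-i-1)`. The case `i ≥ j` is the same sum read symmetrically.
-/

open Matrix Finset

section KMS

variable {R : Type*} [CommRing R] (a : R)

theorem kms_sum_eq_pow_sub {i j : ℕ} (hij : i ≤ j) :
    ∑ k ∈ range (i + 1), a ^ (i - k) * (a ^ (j - k) * (1 - a ^ 2) ^ (if k = 0 then 0 else 1)) =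
      a ^ (j - i) := by
  induction i with
  | zero => simp
  | succ i ih =>
    have hshift : ∀ k ∈ range (i + 1), a ^ (i + 1 - k) = a * a ^ (i - k) := fun k hk => by
      rw [← pow_succ', Nat.sub_add_comm (Nat.lt_succ_iff.mp (mem_range.mp hk))]
    have hj : j - i = j - (i + 1) + 1 := by omega
    rw [sum_range_succ, sum_congr rfl fun k hk => by rw [hshift k hk, mul_assoc], ← mul_sum,
      ih (by omega), hj]
    simp only [Nat.sub_self, pow_zero, one_mul, Nat.add_one_ne_zero, if_false, pow_one]
    ring

theorem kms_sum_eq_pow_dist (i j : ℕ) :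
    ∑ k ∈ range (min i j + 1),
        a ^ (i - k) * (a ^ (j - k) * (1 - a ^ 2) ^ (if k = 0 then 0 else 1)) =
      a ^ Nat.dist i j := by
  rcases le_total i j with hij | hji
  · rw [min_eq_left hij, Nat.dist_eq_sub_of_le hij, kms_sum_eq_pow_sub a hij]
  · rw [min_eq_right hji, Nat.dist_comm, Nat.dist_eq_sub_of_le hji, ← kms_sum_eq_pow_sub a hji]
    exact sum_congr rfl fun k _ => by ring

end KMS

theorem sum_range_ite_le {M : Type*} [AddCommMonoid M] (f : ℕ → M) {m n : ℕ} (hmn : m < n) :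
    ∑ k ∈ range n, (if k ≤ m then f k else 0) = ∑ k ∈ range (m + 1), f k := by
  rw [← sum_filter]
  congr 1
  ext k
  simp only [mem_filter, mem_range]
  omega

-- `Fin n` is 0-based while the paper's indices are 1-based, so the paper's `i = 1` is `(i : ℕ) = 0`.
theorem kms_lu_decomposition_general (a : ℝ) (n : ℕ)
    (L U Ahat : Matrix (Fin n) (Fin n) ℝ)
    (hL : ∀ i j : Fin n, L i j =
      if (j : ℕ) ≤ (i : ℕ) then a ^ ((i : ℕ) - (j : ℕ)) else 0)
    (hU : ∀ i j : Fin n, U i j =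
      if (i : ℕ) ≤ (j : ℕ) then
        a ^ ((j : ℕ) - (i : ℕ)) * (1 - a ^ 2) ^ (if (i : ℕ) = 0 then 0 else 1) else 0)
    (hAhat : ∀ i j : Fin n, Ahat i j = a ^ Nat.dist (i : ℕ) (j : ℕ)) :
    L * U = Ahat := by
  ext i j
  have hmin : min (i : ℕ) j < n := min_lt_of_left_lt i.isLt
  simp only [mul_apply, hL, hU, hAhat, ite_zero_mul_ite_zero, ← le_min_iff]
  rw [Fin.sum_univ_eq_sum_range (fun k => if k ≤ min (i : ℕ) j then
      a ^ ((i : ℕ) - k) * (a ^ ((j : ℕ) - k) * (1 - a ^ 2) ^ (if k = 0 then 0 else 1)) else 0),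
    sum_range_ite_le _ hmin, kms_sum_eq_pow_dist]

/-- LU decomposition of the Kac–Murdock–Szegő matrix:
with `L_{ij} = a^(i-j)` for `i ≥ j` (and `0` otherwise) and
`U_{ij} = a^(j-i) (1-a²)^(1-𝟙{i=1})` for `j ≥ i` (and `0` otherwise),
`L U = Â` where `Â_{ij} = a^|i-j|`.  (Indices are 1-based in the paper;
`i : Fin n` is 0-based, so `i = 1` becomes `(i : ℕ) = 0`.) -/
theorem kms_lu_decomposition (a : ℝ) (n : ℕ) (hn : 1 ≤ n)
    (L U Ahat : Matrix (Fin n) (Fin n) ℝ)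
    (hL : ∀ i j : Fin n, L i j =
      if (j : ℕ) ≤ (i : ℕ) then a ^ ((i : ℕ) - (j : ℕ)) else 0)
    (hU : ∀ i j : Fin n, U i j =
      if (i : ℕ) ≤ (j : ℕ) then
        a ^ ((j : ℕ) - (i : ℕ)) * (1 - a ^ 2) ^ (if (i : ℕ) = 0 then 0 else 1) else 0)
    (hAhat : ∀ i j : Fin n, Ahat i j = a ^ Nat.dist (i : ℕ) (j : ℕ)) :
    L * U = Ahat :=
  kms_lu_decomposition_general a n L U Ahat hL hU hAhat
end

section
/- Let a ∈ ℝ with a² ≠ 1, let n ≥ 2 and 1 ≤ τ ≤ n−1. Let Â_m denote the m×m matrix with entries a^{|i−j|}, let Σ be the n×n matrix Â_n, and let Σ̃ be the n×n block-diagonal matrix diag(Â_τ, Â_{n−τ}). Then Σ̃ is invertible and tr(Σ̃⁻¹·Σ) = n. Moreover, det Σ̃ / det Σ = 1/(1 − a²). -/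
/-!
The KMS matrix has the factorization `Â_m = L · diag(1, 1 - a², …, 1 - a²) · Lᵀ` with `L` unit
lower triangular, `L i j = a ^ (i - j)` (the innovations form of the AR(1) recursion), so
`det Â_m = (1 - a²) ^ (m - 1)`. The reset matrix `Σ̃` is the block-diagonal part of `Σ` for the
split `n = τ + (n - τ)`, and the diagonal blocks of `Σ` are themselves KMS matrices; hence
`Σ̃⁻¹ Σ` has identity diagonal blocks, which gives the trace, and the determinant ratio is
`(1 - a²) ^ ((τ - 1) + (n - τ - 1)) / (1 - a²) ^ (n - 1)`.
-/

open Matrix Finset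

namespace Matrix

section KMS

variable {R : Type*} [CommRing R] (a : R)

def kms (m : ℕ) : Matrix (Fin m) (Fin m) R :=
  of fun i j => a ^ Nat.dist i j

def kmsLower (m : ℕ) : Matrix (Fin m) (Fin m) R :=
  of fun i j => if (j : ℕ) ≤ i then a ^ ((i : ℕ) - j) else 0

def kmsPivot (k : ℕ) : R :=
  if k = 0 then 1 else 1 - a ^ 2

theorem sum_kmsPivot_mul_sq_pow (c : ℕ) :
    ∑ k ∈ range (c + 1), kmsPivot a k * (a ^ 2) ^ (c - k) = 1 := by
  induction c with
  | zero => simp [kmsPivot]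
  | succ c ih =>
    have hshift : ∀ k ∈ range (c + 1),
        kmsPivot a k * (a ^ 2) ^ (c + 1 - k) = a ^ 2 * (kmsPivot a k * (a ^ 2) ^ (c - k)) := by
      intro k hk
      rw [Nat.sub_add_comm (mem_range_succ_iff.mp hk), pow_succ]
      ring
    rw [sum_range_succ, sum_congr rfl hshift, ← mul_sum, ih, kmsPivot, if_neg c.succ_ne_zero,
      Nat.sub_self, pow_zero]
    ring

theorem pow_dist_eq_sum_kmsPivot {m i j : ℕ} (hi : i < m) :
    a ^ Nat.dist i j = ∑ k ∈ range m,
      (if k ≤ i then a ^ (i - k) else 0) * kmsPivot a k * (if k ≤ j then a ^ (j - k) else 0) := by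
  have hterm : ∀ k, (if k ≤ i then a ^ (i - k) else 0) * kmsPivot a k *
      (if k ≤ j then a ^ (j - k) else 0) =
      if k ≤ min i j then a ^ Nat.dist i j * (kmsPivot a k * (a ^ 2) ^ (min i j - k)) else 0 := by
    intro k
    by_cases hk : k ≤ min i j
    · have hexp : i - k + (j - k) = Nat.dist i j + 2 * (min i j - k) := by
        unfold Nat.dist; omega
      rw [if_pos (hk.trans (min_le_left i j)), if_pos (hk.trans (min_le_right i j)), if_pos hk,
        ← pow_mul, mul_right_comm, ← pow_add, hexp, pow_add]
      ring
    · rw [if_neg hk]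
      split_ifs <;> first | omega | simp
  have hrange : (range m).filter (· ≤ min i j) = range (min i j + 1) := by
    ext k; simp only [mem_filter, mem_range]; omega
  rw [sum_congr rfl fun k _ => hterm k, ← sum_filter, hrange, ← mul_sum,
    sum_kmsPivot_mul_sq_pow, mul_one]

theorem kms_eq_kmsLower_mul_diagonal_mul_transpose (m : ℕ) :
    kms a m = kmsLower a m * diagonal (fun k : Fin m => kmsPivot a k) * (kmsLower a m)ᵀ := by
  ext i j
  rw [mul_apply]
  simp only [mul_diagonal, transpose_apply, kmsLower, kms, of_apply]
  rw [Fin.sum_univ_eq_sum_range (fun k => (if k ≤ (i : ℕ) then a ^ ((i : ℕ) - k) else 0) *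
    kmsPivot a k * (if k ≤ (j : ℕ) then a ^ ((j : ℕ) - k) else 0)) m]
  exact pow_dist_eq_sum_kmsPivot a i.isLt

theorem det_kmsLower (m : ℕ) : (kmsLower a m).det = 1 := by
  rw [det_of_isLowerTriangular]
  · exact prod_eq_one fun i _ => by simp [kmsLower]
  · intro i j hij
    simp only [kmsLower, of_apply]
    exact if_neg (not_le.mpr hij)

theorem det_kms (m : ℕ) : (kms a m).det = (1 - a ^ 2) ^ (m - 1) := by
  rw [kms_eq_kmsLower_mul_diagonal_mul_transpose, det_mul, det_mul, det_transpose, det_kmsLower,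
    det_diagonal, one_mul, mul_one]
  cases m with
  | zero => simp
  | succ m => simp [Fin.prod_univ_succ, kmsPivot]

theorem isUnit_det_kms (h : IsUnit (1 - a ^ 2)) (m : ℕ) : IsUnit (kms a m).det := by
  rw [det_kms]
  exact h.pow _

end KMS

section Blocks

variable {R : Type*} {ι m n : Type*} [Fintype ι] [Fintype m] [Fintype n]

theorem trace_submatrix_equiv [AddCommMonoid R] (e : m ≃ ι) (M : Matrix ι ι R) :
    (M.submatrix e e).trace = M.trace :=
  Fintype.sum_equiv e _ _ fun _ => rfl

theorem trace_fromBlocks [AddCommMonoid R] (A : Matrix m m R) (B : Matrix m n R)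
    (C : Matrix n m R) (D : Matrix n n R) : (fromBlocks A B C D).trace = A.trace + D.trace :=
  Fintype.sum_sum_type _

theorem trace_inv_mul_eq_card_of_submatrix_eq_fromBlocks [CommRing R] [DecidableEq ι]
    [DecidableEq m] [DecidableEq n] (e : m ⊕ n ≃ ι) {P M : Matrix ι ι R}
    {A : Matrix m m R} {D : Matrix n n R} (hA : IsUnit A.det) (hD : IsUnit D.det)
    (hP : P.submatrix e e = fromBlocks A 0 0 D) (hM₁₁ : (M.submatrix e e).toBlocks₁₁ = A)
    (hM₂₂ : (M.submatrix e e).toBlocks₂₂ = D) :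
    (P⁻¹ * M).trace = Fintype.card m + Fintype.card n := by
  have hAD : IsUnit A ↔ IsUnit D := by
    rw [isUnit_iff_isUnit_det, isUnit_iff_isUnit_det]
    exact iff_of_true hA hD
  calc (P⁻¹ * M).trace = ((P.submatrix e e)⁻¹ * M.submatrix e e).trace := by
        rw [inv_submatrix_equiv, submatrix_mul_equiv, trace_submatrix_equiv]
    _ = ((fromBlocks A 0 0 D)⁻¹ * fromBlocks A (M.submatrix e e).toBlocks₁₂
          (M.submatrix e e).toBlocks₂₁ D).trace := by
        rw [hP, ← hM₁₁, ← hM₂₂, fromBlocks_toBlocks]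
    _ = (A⁻¹ * A).trace + (D⁻¹ * D).trace := by
        rw [inv_fromBlocks_zero₂₁_of_isUnit_iff _ _ _ hAD, fromBlocks_multiply, trace_fromBlocks]
        simp
    _ = Fintype.card m + Fintype.card n := by
        rw [nonsing_inv_mul _ hA, nonsing_inv_mul _ hD, trace_one, trace_one]

end Blocks

section Reset

variable {R : Type*} [CommRing R] (a : R) (τ m : ℕ)

theorem kms_submatrix_castAdd :
    (kms a (τ + m)).submatrix (Fin.castAdd m) (Fin.castAdd m) = kms a τ :=
  rfl

theorem kms_submatrix_natAdd :
    (kms a (τ + m)).submatrix (Fin.natAdd τ) (Fin.natAdd τ) = kms a m := by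
  ext i j
  simp [kms, Nat.dist_add_add_left]

theorem submatrix_finSumFinEquiv_eq_fromBlocks_kms {P : Matrix (Fin (τ + m)) (Fin (τ + m)) R}
    (hP : ∀ i j : Fin (τ + m),
      P i j = if ((i : ℕ) < τ ↔ (j : ℕ) < τ) then a ^ Nat.dist (i : ℕ) (j : ℕ) else 0) :
    P.submatrix finSumFinEquiv finSumFinEquiv = fromBlocks (kms a τ) 0 0 (kms a m) := by
  ext (i | i) (j | j) <;> simp [hP, kms, Nat.dist_add_add_left]

end Reset

end Matrix

theorem kms_block_reset_general (a : ℝ) (ha : a ^ 2 ≠ 1) (n τ : ℕ)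
    (hτ1 : 1 ≤ τ) (hτ2 : τ ≤ n - 1)
    (S St : Matrix (Fin n) (Fin n) ℝ)
    (hS : ∀ i j : Fin n, S i j = a ^ Nat.dist (i : ℕ) (j : ℕ))
    (hSt : ∀ i j : Fin n, St i j =
      if ((i : ℕ) < τ ↔ (j : ℕ) < τ) then a ^ Nat.dist (i : ℕ) (j : ℕ) else 0) :
    IsUnit St ∧ (St⁻¹ * S).trace = n ∧ St.det / S.det = 1 / (1 - a ^ 2) := by
  obtain ⟨m, rfl⟩ : ∃ m, n = τ + m := ⟨n - τ, by omega⟩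
  have hunit : IsUnit (1 - a ^ 2) := (sub_ne_zero.mpr (Ne.symm ha)).isUnit
  have hS' : S = kms a (τ + m) := ext hS
  have hSt' := submatrix_finSumFinEquiv_eq_fromBlocks_kms a τ m hSt
  have hdetSt : St.det = (1 - a ^ 2) ^ ((τ - 1) + (m - 1)) := by
    rw [← det_submatrix_equiv_self finSumFinEquiv, hSt', det_fromBlocks_zero₁₂, det_kms, det_kms,
      pow_add]
  refine ⟨?_, ?_, ?_⟩
  · rw [isUnit_iff_isUnit_det, hdetSt]
    exact hunit.pow _
  · rw [trace_inv_mul_eq_card_of_submatrix_eq_fromBlocks finSumFinEquiv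
      (isUnit_det_kms a hunit τ) (isUnit_det_kms a hunit m) hSt'
      (hS' ▸ kms_submatrix_castAdd a τ m) (hS' ▸ kms_submatrix_natAdd a τ m)]
    simp
  · rw [hdetSt, hS', det_kms, show τ + m - 1 = (τ - 1) + (m - 1) + 1 by omega,
      pow_succ (1 - a ^ 2), div_mul_cancel_left₀ (pow_ne_zero _ hunit.ne_zero), one_div]

/-- Let `Σ = Â_n` be the `n × n` Kac–Murdock–Szegő matrix
(`Σ_{ij} = a^|i-j|`) and let `Σ̃ = diag(Â_τ, Â_{n-τ})` be the block-diagonal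
matrix corresponding to a reset after time `τ` (here entries are `a^|i-j|` when
`i, j` lie in the same block, `0` otherwise).  Then `Σ̃` is invertible,
`tr(Σ̃⁻¹ Σ) = n` and `det Σ̃ / det Σ = 1/(1 - a²)`. -/
theorem kms_block_reset (a : ℝ) (ha : a ^ 2 ≠ 1) (n τ : ℕ)
    (hn : 2 ≤ n) (hτ1 : 1 ≤ τ) (hτ2 : τ ≤ n - 1)
    (S St : Matrix (Fin n) (Fin n) ℝ)
    (hS : ∀ i j : Fin n, S i j = a ^ Nat.dist (i : ℕ) (j : ℕ))
    (hSt : ∀ i j : Fin n, St i j =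
      if ((i : ℕ) < τ ↔ (j : ℕ) < τ) then a ^ Nat.dist (i : ℕ) (j : ℕ) else 0) :
    IsUnit St ∧ (St⁻¹ * S).trace = n ∧ St.det / S.det = 1 / (1 - a ^ 2) :=
  kms_block_reset_general a ha n τ hτ1 hτ2 S St hS hSt
end

section
/- Let a, σ_Z, γ, c, δ, M ∈ ℝ with |a| > 1, σ_Z > 0, γ > 0, c > 0, 0 < δ < 1 and M ≥ (2c/δ)^{1/γ}. (i) For any real random variable X with E[|X|^γ] ≤ c, P(|X| > M) ≤ δ/2. (ii) Let Z₁, …, Z_{n₀} be i.i.d. N(0, σ_Z²) and S = Σ_{k=1}^{n₀} a^{n₀−k} Z_k, and let q > 0 satisfy P(G > q) = (1 − δ/2)/2 for G a standard Gaussian. If M·√(a² − 1) ≤ σ_Z·q·√(a^{2n₀} − 1), then P(|S| ≤ M) ≤ δ/2. Consequently, for Willie's test that declares 'controlled' when |X_{n₀}| ≤ M, the false-alarm probability α = P(|S| ≤ M) and the missed-detection probability β = P(|X_{n₀}| > M) under any control keeping E[|X_{n₀}|^γ] ≤ c satisfy α + β ≤ δ, i.e. Willie achieves (1−δ)-detection.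 -/
/-!
Part (i) is Markov's inequality for `|X|^γ` at the level `M^γ ≥ 2c/δ`. For part (ii), `S` is a
weighted sum of independent centred Gaussians, hence a centred Gaussian with standard deviation
`s = σ_Z √((a^(2n₀) - 1)/(a² - 1))`; the hypothesis on `M` says `M ≤ s q`, so
`P(|S| ≤ M) ≤ P(|G| ≤ q) = 1 - 2 Q(q) = δ/2`. Adding the two bounds gives `α + β ≤ δ`.
-/

open MeasureTheory ProbabilityTheory
open scoped ENNReal NNReal

section Markov

variable {Ω : Type*} [MeasurableSpace Ω] {μ : Measure Ω}

lemma measure_lt_abs_le_lintegral_rpow_div {X : Ω → ℝ} (hX : AEMeasurable X μ) {γ M : ℝ}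
    (hγ : 0 < γ) (hM : 0 < M) :
    μ {ω | M < |X ω|} ≤ (∫⁻ ω, ENNReal.ofReal (|X ω| ^ γ) ∂μ) / ENNReal.ofReal (M ^ γ) := by
  have hf : AEMeasurable (fun ω => ENNReal.ofReal (|X ω| ^ γ)) μ :=
    (measurable_abs.pow_const γ).ennreal_ofReal.comp_aemeasurable hX
  refine (measure_mono fun ω (hω : M < |X ω|) => ?_).trans
    (meas_ge_le_lintegral_div hf ?_ ENNReal.ofReal_ne_top)
  · exact ENNReal.ofReal_le_ofReal (Real.rpow_le_rpow hM.le hω.le hγ.le)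
  · exact (ENNReal.ofReal_pos.2 (Real.rpow_pos_of_pos hM γ)).ne'

lemma measure_lt_abs_le_of_lintegral_rpow_le {X : Ω → ℝ} (hX : AEMeasurable X μ)
    {γ c ε M : ℝ} (hγ : 0 < γ) (hc : 0 < c) (hε : 0 < ε) (hM : (c / ε) ^ (1 / γ) ≤ M)
    (hmom : ∫⁻ ω, ENNReal.ofReal (|X ω| ^ γ) ∂μ ≤ ENNReal.ofReal c) :
    μ {ω | M < |X ω|} ≤ ENNReal.ofReal ε := by
  have hcε : 0 < c / ε := div_pos hc hε
  have hM0 : 0 < M := (Real.rpow_pos_of_pos hcε _).trans_le hM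
  have hMγ : c / ε ≤ M ^ γ := by
    rwa [one_div, Real.rpow_inv_le_iff_of_pos hcε.le hM0.le hγ] at hM
  calc μ {ω | M < |X ω|}
      ≤ ENNReal.ofReal c / ENNReal.ofReal (M ^ γ) :=
        (measure_lt_abs_le_lintegral_rpow_div hX hγ hM0).trans (ENNReal.div_le_div_right hmom _)
    _ = ENNReal.ofReal (c / M ^ γ) := (ENNReal.ofReal_div_of_pos (by positivity)).symm
    _ ≤ ENNReal.ofReal ε := by
        refine ENNReal.ofReal_le_ofReal ((div_le_iff₀ (by positivity)).2 ?_)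
        rwa [div_le_iff₀ hε, mul_comm] at hMγ

end Markov

section GaussianSums

variable {Ω ι : Type*} [MeasurableSpace Ω] {μ : Measure Ω} [IsProbabilityMeasure μ]

lemma map_sum_eq_gaussianReal {Y : ι → Ω → ℝ} (hY : ∀ i, Measurable (Y i))
    (hind : iIndepFun Y μ) {m : ι → ℝ} {v : ι → ℝ≥0}
    (hlaw : ∀ i, μ.map (Y i) = gaussianReal (m i) (v i)) (s : Finset ι) :
    μ.map (∑ i ∈ s, Y i) = gaussianReal (∑ i ∈ s, m i) (∑ i ∈ s, v i) := by
  classical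
  induction s using Finset.induction_on with
  | empty => simp [Pi.zero_def, Measure.map_const, gaussianReal_zero_var]
  | insert i s hi ih =>
    simp only [Finset.sum_insert hi, add_comm (Y i), add_comm (m i), add_comm (v i)]
    exact gaussianReal_add_gaussianReal_of_indepFun
      (hind.indepFun_finsetSum_of_notMem hY hi) ih (hlaw i)

lemma map_weighted_sum_eq_gaussianReal {Z : ι → Ω → ℝ} (hZ : ∀ i, Measurable (Z i))
    (hind : iIndepFun Z μ) {v : ℝ≥0} (hlaw : ∀ i, μ.map (Z i) = gaussianReal 0 v)
    (w : ι → ℝ) (s : Finset ι) {V : ℝ≥0} (hV : (V : ℝ) = (∑ i ∈ s, w i ^ 2) * v) :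
    μ.map (fun ω => ∑ i ∈ s, w i * Z i ω) = gaussianReal 0 V := by
  have hlaw' : ∀ i, μ.map (fun ω => w i * Z i ω)
      = gaussianReal 0 (.mk (w i ^ 2) (sq_nonneg _) * v) := fun i => by
    rw [show (fun ω => w i * Z i ω) = (w i * ·) ∘ Z i from rfl,
      ← Measure.map_map (measurable_const_mul (w i)) (hZ i), hlaw, gaussianReal_map_const_mul,
      mul_zero]
  have := map_sum_eq_gaussianReal (fun i => (hZ i).const_mul (w i))
    (hind.comp _ fun i => measurable_const_mul (w i)) hlaw' s
  rw [Finset.sum_const_zero] at this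
  convert this using 2
  · ext ω
    simp only [Finset.sum_apply]
  · ext
    simp only [hV, Finset.sum_mul, NNReal.coe_sum, NNReal.coe_mul, NNReal.coe_mk]

end GaussianSums

section SymmetricIntervals

lemma gaussianReal_Icc_neg_self (v : ℝ≥0) {t : ℝ} (ht : 0 ≤ t) :
    gaussianReal 0 v (Set.Icc (-t) t) = 1 - 2 * gaussianReal 0 v (Set.Ioi t) := by
  have hsymm : gaussianReal 0 v (Set.Iio (-t)) = gaussianReal 0 v (Set.Ioi t) := by
    conv_lhs => rw [← neg_zero, ← gaussianReal_map_neg]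
    rw [Measure.map_apply measurable_neg measurableSet_Iio]
    congr 1
    ext x
    simp
  have hcompl : Set.Icc (-t) t = (Set.Iio (-t) ∪ Set.Ioi t)ᶜ := by
    ext x
    simp [and_comm]
  have hdisj : Disjoint (Set.Iio (-t)) (Set.Ioi t) :=
    Set.disjoint_left.2 fun x (hx : x < -t) (hx' : t < x) => by linarith
  rw [hcompl, prob_compl_eq_one_sub (measurableSet_Iio.union measurableSet_Ioi),
    measure_union hdisj measurableSet_Ioi, hsymm, two_mul]

lemma gaussianReal_Icc_mul_neg_self {σ : ℝ} (hσ : 0 < σ) {v : ℝ≥0} (hv : (v : ℝ) = σ ^ 2)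
    (t : ℝ) :
    gaussianReal 0 v (Set.Icc (-(σ * t)) (σ * t)) = gaussianReal 0 1 (Set.Icc (-t) t) := by
  have hscale : (gaussianReal 0 1).map (σ * ·) = gaussianReal 0 v := by
    rw [gaussianReal_map_const_mul, mul_zero, mul_one]
    congr 1
    exact NNReal.coe_injective hv.symm
  rw [← hscale, Measure.map_apply (measurable_const_mul σ) measurableSet_Icc,
    Set.preimage_const_mul_Icc₀ _ _ hσ, neg_div, mul_div_cancel_left₀ t hσ.ne']

end SymmetricIntervals

lemma sum_Icc_pow_sub_sq (a : ℝ) (n : ℕ) (ha : a ^ 2 ≠ 1) :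
    ∑ k ∈ Finset.Icc 1 n, (a ^ (n - k)) ^ 2 = (a ^ (2 * n) - 1) / (a ^ 2 - 1) := by
  simp_rw [← pow_mul, mul_comm _ 2, pow_mul]
  rw [← Finset.Ico_add_one_right_eq_Icc, Finset.sum_Ico_reflect _ _ le_rfl, Nat.add_sub_cancel,
    Nat.sub_self, ← Finset.range_eq_Ico, geom_sum_eq ha]

def ar1State {Ω : Type*} (a : ℝ) (Z : ℕ → Ω → ℝ) (n : ℕ) (ω : Ω) : ℝ :=
  ∑ k ∈ Finset.Icc 1 n, a ^ (n - k) * Z k ω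

section AR1

variable {Ω : Type*} [MeasurableSpace Ω] {P : Measure Ω} [IsProbabilityMeasure P]
  {a σ : ℝ} {Z : ℕ → Ω → ℝ}

lemma map_ar1State_eq_gaussianReal (hZ : ∀ k, Measurable (Z k)) (hind : iIndepFun Z P)
    (hlaw : ∀ k, P.map (Z k) = gaussianReal 0 (σ ^ 2).toNNReal) (n : ℕ) :
    P.map (ar1State a Z n)
      = gaussianReal 0 (σ ^ 2 * ∑ k ∈ Finset.Icc 1 n, (a ^ (n - k)) ^ 2).toNNReal :=
  map_weighted_sum_eq_gaussianReal hZ hind hlaw _ _ <| by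
    rw [Real.coe_toNNReal _ (by positivity), Real.coe_toNNReal _ (sq_nonneg σ), mul_comm]

lemma measure_abs_ar1State_le_le (ha : 1 < |a|) (hσ : 0 < σ) (hZ : ∀ k, Measurable (Z k))
    (hind : iIndepFun Z P) (hlaw : ∀ k, P.map (Z k) = gaussianReal 0 (σ ^ 2).toNNReal)
    {n : ℕ} (hn : 1 ≤ n) {q M : ℝ} (hq : 0 < q)
    (hM : M * √(a ^ 2 - 1) ≤ σ * q * √(a ^ (2 * n) - 1)) :
    P {ω | |ar1State a Z n ω| ≤ M} ≤ 1 - 2 * gaussianReal 0 1 (Set.Ioi q) := by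
  have ha2 : 1 < a ^ 2 := (one_lt_sq_iff_one_lt_abs a).2 ha
  have han : 1 < a ^ (2 * n) := by
    rw [pow_mul]
    exact one_lt_pow₀ ha2 (by omega)
  set r := (a ^ (2 * n) - 1) / (a ^ 2 - 1)
  have hr : 0 < r := div_pos (by linarith) (by linarith)
  set s := σ * √r with hs_def
  have hs : 0 < s := by positivity
  have hvar : ((σ ^ 2 * ∑ k ∈ Finset.Icc 1 n, (a ^ (n - k)) ^ 2).toNNReal : ℝ) = s ^ 2 := by
    rw [sum_Icc_pow_sub_sq a n ha2.ne', Real.coe_toNNReal _ (by positivity), mul_pow,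
      Real.sq_sqrt hr.le]
  have hMs : M ≤ s * q := by
    have hB : 0 < √(a ^ 2 - 1) := Real.sqrt_pos.2 (by linarith)
    calc M = M * √(a ^ 2 - 1) / √(a ^ 2 - 1) := (mul_div_cancel_right₀ M hB.ne').symm
      _ ≤ σ * q * √(a ^ (2 * n) - 1) / √(a ^ 2 - 1) := div_le_div_of_nonneg_right hM hB.le
      _ = s * q := by
        rw [hs_def, Real.sqrt_div (by linarith : 0 ≤ a ^ (2 * n) - 1)]
        ring
  have hmeas : Measurable (ar1State a Z n) :=
    Finset.measurable_sum _ fun k _ => (hZ k).const_mul _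
  calc P {ω | |ar1State a Z n ω| ≤ M} = P.map (ar1State a Z n) (Set.Icc (-M) M) := by
        rw [Measure.map_apply hmeas measurableSet_Icc]
        simp only [Set.preimage, Set.mem_Icc, abs_le]
    _ ≤ P.map (ar1State a Z n) (Set.Icc (-(s * q)) (s * q)) :=
        measure_mono (Set.Icc_subset_Icc (neg_le_neg hMs) hMs)
    _ = gaussianReal 0 1 (Set.Icc (-q) q) := by
        rw [map_ar1State_eq_gaussianReal hZ hind hlaw, gaussianReal_Icc_mul_neg_self hs hvar]
    _ = 1 - 2 * gaussianReal 0 1 (Set.Ioi q) := gaussianReal_Icc_neg_self 1 hq.le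

end AR1

/-- Detecting stabilization of an unstable Gaussian AR(1) system, `|a| > 1`.
(i) Markov: if `E[|X|^γ] ≤ c` and `M ≥ (2c/δ)^(1/γ)`, then `P(|X| > M) ≤ δ/2`.
(ii) For `S = ∑_{k=1}^{n₀} a^(n₀-k) Z_k` with `Z_k` i.i.d. `N(0, σ_Z²)` and `q > 0` with
`Q(q) = (1-δ/2)/2`, if `M √(a²-1) ≤ σ_Z q √(a^(2n₀)-1)` then `P(|S| ≤ M) ≤ δ/2`.
Consequently the test `|X_{n₀}| ≤ M` has `α + β ≤ δ`: Willie achieves `(1-δ)`-detection. -/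
theorem unstable_ar1_detection {Ω : Type*} [MeasurableSpace Ω] (P : Measure Ω)
    [IsProbabilityMeasure P] (a σZ γ c δ M : ℝ)
    (ha : 1 < |a|) (hσ : 0 < σZ) (hγ : 0 < γ) (hc : 0 < c)
    (hδ0 : 0 < δ) (hδ1 : δ < 1) (hM : (2 * c / δ) ^ (1 / γ) ≤ M)
    (n₀ : ℕ) (hn₀ : 1 ≤ n₀)
    (Z : ℕ → Ω → ℝ) (hZmeas : ∀ k, Measurable (Z k))
    (hZindep : iIndepFun Z P)
    (hZdist : ∀ k, Measure.map (Z k) P = gaussianReal 0 ((σZ ^ 2).toNNReal))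
    (q : ℝ) (hq : 0 < q)
    (hq2 : gaussianReal 0 1 (Set.Ioi q) = ENNReal.ofReal ((1 - δ / 2) / 2)) :
    (∀ X : Ω → ℝ, AEMeasurable X P →
        (∫⁻ ω, ENNReal.ofReal (|X ω| ^ γ) ∂P) ≤ ENNReal.ofReal c →
        P {ω | M < |X ω|} ≤ ENNReal.ofReal (δ / 2)) ∧
      (M * Real.sqrt (a ^ 2 - 1) ≤ σZ * q * Real.sqrt (a ^ (2 * n₀) - 1) →
        P {ω | |∑ k ∈ Finset.Icc 1 n₀, a ^ (n₀ - k) * Z k ω| ≤ M}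
          ≤ ENNReal.ofReal (δ / 2)) ∧
      (∀ X : Ω → ℝ, AEMeasurable X P →
        (∫⁻ ω, ENNReal.ofReal (|X ω| ^ γ) ∂P) ≤ ENNReal.ofReal c →
        M * Real.sqrt (a ^ 2 - 1) ≤ σZ * q * Real.sqrt (a ^ (2 * n₀) - 1) →
        P {ω | |∑ k ∈ Finset.Icc 1 n₀, a ^ (n₀ - k) * Z k ω| ≤ M} +
            P {ω | M < |X ω|} ≤ ENNReal.ofReal δ) := by
  have hδ2 : 0 ≤ δ / 2 := by positivity
  have hβ : ∀ X : Ω → ℝ, AEMeasurable X P →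
      (∫⁻ ω, ENNReal.ofReal (|X ω| ^ γ) ∂P) ≤ ENNReal.ofReal c →
      P {ω | M < |X ω|} ≤ ENNReal.ofReal (δ / 2) := fun X hX hmom =>
    measure_lt_abs_le_of_lintegral_rpow_le hX hγ hc (half_pos hδ0)
      (by rwa [div_div_eq_mul_div, mul_comm c]) hmom
  have hα : M * Real.sqrt (a ^ 2 - 1) ≤ σZ * q * Real.sqrt (a ^ (2 * n₀) - 1) →
      P {ω | |∑ k ∈ Finset.Icc 1 n₀, a ^ (n₀ - k) * Z k ω| ≤ M} ≤ ENNReal.ofReal (δ / 2) :=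
    fun hMq => calc
      _ ≤ 1 - 2 * gaussianReal 0 1 (Set.Ioi q) :=
        measure_abs_ar1State_le_le ha hσ hZmeas hZindep hZdist hn₀ hq hMq
      _ = ENNReal.ofReal (δ / 2) := by
        rw [hq2, ← ENNReal.ofReal_ofNat 2, ← ENNReal.ofReal_mul zero_le_two, ← ENNReal.ofReal_one,
          ← ENNReal.ofReal_sub _ (by linarith)]
        congr 1
        ring
  refine ⟨hβ, hα, fun X hX hmom hMq => ?_⟩
  calc _ ≤ ENNReal.ofReal (δ / 2) + ENNReal.ofReal (δ / 2) :=
        add_le_add (hα hMq) (hβ X hX hmom)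
    _ = ENNReal.ofReal δ := by rw [← ENNReal.ofReal_add hδ2 hδ2, add_halves]
end

section
/- Let σ_v > 0, E_U > 0, 0 < δ < 1, K ≥ 1, and let u₁, …, u_K be real numbers with u_n² = E_U for every n. Let v₁, …, v_K be i.i.d. N(0, σ_v²). Define E_W⁰ = (1/K)·Σ_{n=1}^{K} v_n² and E_W¹ = (1/K)·Σ_{n=1}^{K} (u_n + v_n)², and set the threshold t = 2σ_v²/√(δK). Then the false-alarm probability α = P( E_W⁰ ≥ σ_v² + t ) satisfies α ≤ δ/2, and if K > K₀(δ) = (4/(δ·SNR²))·(1 + √(1 + 2·SNR))² with SNR = E_U/σ_v², then the missed-detection probability β = P( E_W¹ < σ_v² + t ) satisfies β ≤ δ/2; hence α + β ≤ δ, i.e. Willie achieves (1−δ)-detection. -/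
open MeasureTheory ProbabilityTheory Real Set Finset
open scoped NNReal ENNReal Nat

/-!
Under either hypothesis the per-sample energies `(u_n + v_n)²` are independent, with
`u_n + v_n ~ N(u_n, σ_v²)`, so they have mean `E_U + σ_v²` and variance `2σ_v⁴ + 4E_Uσ_v²`
(the variance of `X²` for `X ~ N(μ, v)` is `2v² + 4μ²v`, by the Gaussian moments
`E X² = v`, `E X³ = 0`, `E X⁴ = 3v²`). Chebyshev's inequality for the average energy then bounds
`α` and `β`. The threshold `t` makes the false-alarm bound exactly `δ/2`, and `K > K₀(δ)` is
equivalent to `√(δK)(E_U - t) > 2σ_v²√(1 + 2·SNR) = √(2(2σ_v⁴ + 4E_Uσ_v²))`, which makes the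
missed-detection bound at most `δ/2`.
-/

theorem integral_pow_two_mul_mul_exp_neg_mul_sq {b : ℝ} (hb : 0 < b) (k : ℕ) :
    ∫ x : ℝ, x ^ (2 * k) * exp (-b * x ^ 2) =
      b ^ (-(2 * k + 1) / 2 : ℝ) * Gamma (k + 1 / 2) := by
  have hhalf := integral_rpow_mul_exp_neg_mul_rpow (p := 2) (q := 2 * k) two_pos
    (by linarith [(Nat.cast_nonneg k : (0 : ℝ) ≤ k)]) hb
  have heven : (fun x : ℝ => x ^ (2 * k) * exp (-b * x ^ 2))
      = fun x => |x| ^ (2 * (k : ℝ)) * exp (-b * |x| ^ (2 : ℝ)) := by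
    ext x
    rw [show 2 * (k : ℝ) = ((2 * k : ℕ) : ℝ) by push_cast; ring, rpow_natCast, rpow_two, sq_abs,
      pow_abs, abs_of_nonneg ((even_two_mul k).pow_nonneg x)]
  rw [heven, integral_comp_abs (f := fun x => x ^ (2 * (k : ℝ)) * exp (-b * x ^ (2 : ℝ))), hhalf,
    show (2 * (k : ℝ) + 1) / 2 = k + 1 / 2 by ring]
  ring

theorem integral_pow_two_mul_gaussianReal (v : ℝ≥0) (k : ℕ) :
    ∫ x, x ^ (2 * k) ∂gaussianReal 0 v = v ^ k * (2 * k - 1 : ℕ)‼ := by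
  rcases eq_or_ne v 0 with rfl | hv
  · cases k <;> simp
  have h2v : (0 : ℝ) < 2 * v := by positivity
  have hpdf : ∀ x : ℝ, gaussianPDFReal 0 v x • x ^ (2 * k)
      = (√(2 * π * v))⁻¹ * (x ^ (2 * k) * exp (-(2 * v : ℝ)⁻¹ * x ^ 2)) := by
    intro x
    rw [gaussianPDFReal, smul_eq_mul, sub_zero, neg_div, div_eq_inv_mul, neg_mul]
    ring
  have hscale : ((2 * v : ℝ)⁻¹) ^ (-(2 * k + 1) / 2 : ℝ) = (2 * v) ^ k * √(2 * v) := by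
    rw [inv_rpow h2v.le, ← rpow_neg h2v.le, neg_div, neg_neg, add_div,
      mul_div_cancel_left₀ _ two_ne_zero, rpow_add h2v, rpow_natCast, sqrt_eq_rpow]
  rw [integral_gaussianReal_eq_integral_smul hv, integral_congr_ae (ae_of_all _ hpdf),
    integral_const_mul, integral_pow_two_mul_mul_exp_neg_mul_sq (inv_pos.2 h2v), hscale,
    Gamma_nat_add_half, show 2 * π * v = π * (2 * v) by ring, sqrt_mul pi_pos.le]
  have : 0 < √π := sqrt_pos.2 pi_pos
  have : 0 < √(2 * v) := sqrt_pos.2 h2v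
  field_simp
  ring

theorem integral_pow_of_odd_gaussianReal (v : ℝ≥0) {n : ℕ} (hn : Odd n) :
    ∫ x, x ^ n ∂gaussianReal 0 v = 0 := by
  have h := integral_map_equiv (μ := gaussianReal 0 v) (MeasurableEquiv.neg ℝ) (fun x => x ^ n)
  simp only [MeasurableEquiv.neg_apply, hn.neg_pow, integral_neg] at h
  rw [show (Neg.neg : ℝ → ℝ) = fun x => -x from rfl, gaussianReal_map_neg, neg_zero] at h
  linarith

theorem integral_const_add_pow {μ : Measure ℝ} {n : ℕ}
    (hμ : ∀ k ≤ n, Integrable (fun x => x ^ k) μ) (c : ℝ) :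
    ∫ x, (c + x) ^ n ∂μ = ∑ k ∈ range (n + 1), (∫ x, x ^ k ∂μ) * c ^ (n - k) * n.choose k := by
  simp_rw [add_comm c, add_pow]
  rw [integral_finsetSum _ fun k hk =>
    ((hμ k (Nat.lt_succ_iff.1 (mem_range.1 hk))).mul_const _).mul_const _]
  simp_rw [integral_mul_const]

section GaussianSquare

variable (μ : ℝ) (v : ℝ≥0)

lemma integrable_pow_gaussianReal (n : ℕ) : Integrable (fun x => x ^ n) (gaussianReal μ v) :=
  integrable_pow_of_mem_interior_integrableExpSet (by simp) n

lemma integral_gaussianReal_eq_integral_const_add {f : ℝ → ℝ} (hf : Measurable f) :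
    ∫ x, f x ∂gaussianReal μ v = ∫ x, f (μ + x) ∂gaussianReal 0 v := by
  conv_lhs => rw [← zero_add μ, ← gaussianReal_map_const_add]
  exact integral_map (by fun_prop) hf.aestronglyMeasurable

lemma integral_sq_gaussianReal : ∫ x, x ^ 2 ∂gaussianReal μ v = μ ^ 2 + v := by
  have h := variance_id_gaussianReal (μ := μ) (v := v)
  rw [variance_eq_sub (memLp_id_gaussianReal 2)] at h
  simp only [Pi.pow_apply, id, integral_id_gaussianReal] at h
  linarith

lemma integral_pow_four_gaussianReal :
    ∫ x, x ^ 4 ∂gaussianReal μ v = μ ^ 4 + 6 * μ ^ 2 * v + 3 * v ^ 2 := by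
  have m2 := integral_pow_two_mul_gaussianReal v 1
  have m3 := integral_pow_of_odd_gaussianReal v (n := 3) (by decide)
  have m4 := integral_pow_two_mul_gaussianReal v 2
  rw [integral_gaussianReal_eq_integral_const_add μ v (by fun_prop),
    integral_const_add_pow (fun k _ => integrable_pow_gaussianReal 0 v k)]
  norm_num [sum_range_succ, Nat.choose] at m2 m4 ⊢
  rw [m2, m3, m4]
  ring

lemma memLp_sq_gaussianReal : MemLp (fun x => x ^ 2) 2 (gaussianReal μ v) :=
  (memLp_two_iff_integrable_sq (by fun_prop)).2 <| by
    simpa only [← pow_mul] using integrable_pow_gaussianReal μ v 4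

lemma variance_sq_gaussianReal :
    Var[fun x => x ^ 2; gaussianReal μ v] = 2 * v ^ 2 + 4 * μ ^ 2 * v := by
  rw [variance_eq_sub (memLp_sq_gaussianReal μ v)]
  simp only [Pi.pow_apply, ← pow_mul]
  rw [integral_pow_four_gaussianReal, integral_sq_gaussianReal]
  ring

end GaussianSquare

section EnergyDeviation

variable {Ω : Type*} [MeasurableSpace Ω] {P : Measure Ω}

namespace ProbabilityTheory.HasLaw

variable {X : Ω → ℝ} {μ : ℝ} {v : ℝ≥0} (hX : HasLaw X (gaussianReal μ v) P)
include hX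

lemma memLp_sq_gaussianReal : MemLp (fun ω => X ω ^ 2) 2 P :=
  (memLp_map_measure_iff (g := fun x => x ^ 2) (by fun_prop) hX.aemeasurable).1 <| by
    rw [hX.map_eq]; exact _root_.memLp_sq_gaussianReal μ v

lemma integral_sq_gaussianReal : ∫ ω, X ω ^ 2 ∂P = μ ^ 2 + v :=
  (hX.integral_comp (f := fun x => x ^ 2) (by fun_prop)).trans (_root_.integral_sq_gaussianReal μ v)

lemma variance_sq_gaussianReal : Var[fun ω => X ω ^ 2; P] = 2 * v ^ 2 + 4 * μ ^ 2 * v := by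
  rw [← _root_.variance_sq_gaussianReal μ v, ← hX.map_eq,
    variance_map (by fun_prop) hX.aemeasurable]
  rfl

end ProbabilityTheory.HasLaw

lemma meas_ge_le_sum_variance_div_sq [IsFiniteMeasure P] {ι : Type*} {s : Finset ι}
    {X : ι → Ω → ℝ} (hX : ∀ i ∈ s, MemLp (X i) 2 P)
    (hindep : (s : Set ι).Pairwise fun i j => IndepFun (X i) (X j) P) {c : ℝ} (hc : 0 < c) :
    P {ω | c ≤ |∑ i ∈ s, X i ω - ∑ i ∈ s, P[X i]|}
      ≤ ENNReal.ofReal ((∑ i ∈ s, Var[X i; P]) / c ^ 2) := by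
  have h := meas_ge_le_variance_div_sq (memLp_finsetSum' s hX) hc
  simp only [Finset.sum_apply] at h
  rwa [IndepFun.variance_sum hX hindep,
    integral_finsetSum s fun i hi => (hX i hi).integrable one_le_two] at h

lemma meas_le_abs_mean_sq_sub_le [IsFiniteMeasure P] {ι : Type*} {s : Finset ι} (hs : s.Nonempty)
    {X : ι → Ω → ℝ} {c : ι → ℝ} {E : ℝ} {v : ℝ≥0}
    (hlaw : ∀ i ∈ s, HasLaw (X i) (gaussianReal (c i) v) P) (hc : ∀ i ∈ s, c i ^ 2 = E)
    (hindep : (s : Set ι).Pairwise fun i j => IndepFun (X i) (X j) P) {r : ℝ} (hr : 0 < r) :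
    P {ω | r ≤ |1 / #s * ∑ i ∈ s, X i ω ^ 2 - (E + v)|}
      ≤ ENNReal.ofReal ((2 * v ^ 2 + 4 * E * v) / (#s * r ^ 2)) := by
  have hn : (0 : ℝ) < #s := by exact_mod_cast hs.card_pos
  have hcheb := meas_ge_le_sum_variance_div_sq (X := fun i ω => X i ω ^ 2)
    (fun i hi => (hlaw i hi).memLp_sq_gaussianReal)
    (fun i hi j hj hij => (hindep hi hj hij).comp (measurable_id.pow_const 2)
      (measurable_id.pow_const 2)) (mul_pos hn hr)
  have hmean : ∑ i ∈ s, ∫ ω, X i ω ^ 2 ∂P = #s * (E + v) := by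
    rw [sum_congr rfl (g := fun _ => E + v) fun i hi => by
      rw [(hlaw i hi).integral_sq_gaussianReal, hc i hi], sum_const, nsmul_eq_mul]
  have hvar : ∑ i ∈ s, Var[fun ω => X i ω ^ 2; P] = #s * (2 * v ^ 2 + 4 * E * v) := by
    rw [sum_congr rfl (g := fun _ => 2 * v ^ 2 + 4 * E * v) fun i hi => by
      rw [(hlaw i hi).variance_sq_gaussianReal, hc i hi], sum_const, nsmul_eq_mul]
  rw [hmean, hvar] at hcheb
  refine (measure_mono fun ω (hω : r ≤ _) => ?_).trans (hcheb.trans_eq (by congr 1; field_simp))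
  calc (#s : ℝ) * r ≤ #s * |1 / #s * ∑ i ∈ s, X i ω ^ 2 - (E + v)| := by gcongr
    _ = |∑ i ∈ s, X i ω ^ 2 - #s * (E + v)| := by
      rw [← abs_of_pos hn, ← abs_mul, abs_of_pos hn]
      field_simp

end EnergyDeviation

section Threshold

variable {σ E δ K : ℝ} (hσ : 0 < σ) (hE : 0 < E) (hδ : 0 < δ)
  (hK : 4 / (δ * (E / σ ^ 2) ^ 2) * (1 + √(1 + 2 * (E / σ ^ 2))) ^ 2 < K)
include hσ hE hδ hK

lemma two_mul_sq_mul_one_add_sqrt_lt :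
    2 * σ ^ 2 * (1 + √(1 + 2 * (E / σ ^ 2))) < √(δ * K) * E := by
  have hsq : (2 * σ ^ 2 * (1 + √(1 + 2 * (E / σ ^ 2))) / E) ^ 2 < δ * K := by
    calc _ = δ * (4 / (δ * (E / σ ^ 2) ^ 2) * (1 + √(1 + 2 * (E / σ ^ 2))) ^ 2) := by
          field_simp; norm_num
      _ < δ * K := by gcongr
  rw [← div_lt_iff₀ hE]
  exact lt_sqrt (by positivity) |>.2 hsq

lemma two_mul_sq_div_sqrt_lt : 2 * σ ^ 2 / √(δ * K) < E := by
  have h := two_mul_sq_mul_one_add_sqrt_lt hσ hE hδ hK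
  rw [div_lt_iff₀ ((mul_pos_iff_of_pos_right hE).1 (lt_trans (by positivity) h))]
  nlinarith [sqrt_nonneg (1 + 2 * (E / σ ^ 2))]

lemma variance_div_sq_le_half :
    (2 * (σ ^ 2) ^ 2 + 4 * E * σ ^ 2) / (K * (E - 2 * σ ^ 2 / √(δ * K)) ^ 2) ≤ δ / 2 := by
  have hKpos : 0 < K := lt_of_le_of_lt (by positivity) hK
  have hmargin : 0 < E - 2 * σ ^ 2 / √(δ * K) := sub_pos.2 (two_mul_sq_div_sqrt_lt hσ hE hδ hK)
  have hR : √(1 + 2 * (E / σ ^ 2)) ^ 2 = 1 + 2 * (E / σ ^ 2) := sq_sqrt (by positivity)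
  have hscaled : √(δ * K) * (E - 2 * σ ^ 2 / √(δ * K)) = √(δ * K) * E - 2 * σ ^ 2 := by
    field_simp
  have hdev : 2 * σ ^ 2 * √(1 + 2 * (E / σ ^ 2)) ≤ √(δ * K) * E - 2 * σ ^ 2 := by
    linarith [two_mul_sq_mul_one_add_sqrt_lt hσ hE hδ hK]
  have key : 2 * (2 * (σ ^ 2) ^ 2 + 4 * E * σ ^ 2) ≤ δ * K * (E - 2 * σ ^ 2 / √(δ * K)) ^ 2 :=
    calc 2 * (2 * (σ ^ 2) ^ 2 + 4 * E * σ ^ 2) = (2 * σ ^ 2 * √(1 + 2 * (E / σ ^ 2))) ^ 2 := by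
          rw [mul_pow, hR]; field_simp; ring
      _ ≤ (√(δ * K) * E - 2 * σ ^ 2) ^ 2 := pow_le_pow_left₀ (by positivity) hdev 2
      _ = δ * K * (E - 2 * σ ^ 2 / √(δ * K)) ^ 2 := by
          rw [← hscaled, mul_pow, sq_sqrt (by positivity)]
  rw [div_le_iff₀ (by positivity)]
  nlinarith

end Threshold

section Detection

variable {Ω ι : Type*} [MeasurableSpace Ω] {P : Measure Ω} [IsFiniteMeasure P] {s : Finset ι}
  {X : ι → Ω → ℝ} {σ δ : ℝ}

lemma false_alarm_le (hs : s.Nonempty)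
    (hlaw : ∀ i ∈ s, HasLaw (X i) (gaussianReal 0 (σ ^ 2).toNNReal) P)
    (hindep : (s : Set ι).Pairwise fun i j => IndepFun (X i) (X j) P) (hσ : 0 < σ) (hδ : 0 < δ) :
    P {ω | σ ^ 2 + 2 * σ ^ 2 / √(δ * #s) ≤ 1 / #s * ∑ i ∈ s, X i ω ^ 2}
      ≤ ENNReal.ofReal (δ / 2) := by
  set t := 2 * σ ^ 2 / √(δ * #s)
  have h := meas_le_abs_mean_sq_sub_le hs (c := fun _ => 0) hlaw (fun _ _ => zero_pow two_ne_zero)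
    hindep (r := t) (by positivity)
  rw [coe_toNNReal _ (sq_nonneg σ)] at h
  refine (measure_mono ?_).trans (h.trans_eq (congrArg ENNReal.ofReal ?_))
  · intro ω (hω : σ ^ 2 + t ≤ _)
    show t ≤ |_|
    exact le_abs.2 (.inl (by linarith))
  · have ht : t ^ 2 = 4 * (σ ^ 2) ^ 2 / (δ * #s) := by
      rw [div_pow, sq_sqrt (by positivity)]; ring
    rw [ht]
    field_simp
    ring

lemma missed_detection_le (hs : s.Nonempty) {c : ι → ℝ} {E : ℝ}
    (hlaw : ∀ i ∈ s, HasLaw (X i) (gaussianReal (c i) (σ ^ 2).toNNReal) P)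
    (hc : ∀ i ∈ s, c i ^ 2 = E)
    (hindep : (s : Set ι).Pairwise fun i j => IndepFun (X i) (X j) P)
    (hσ : 0 < σ) (hE : 0 < E) (hδ : 0 < δ)
    (hK₀ : 4 / (δ * (E / σ ^ 2) ^ 2) * (1 + √(1 + 2 * (E / σ ^ 2))) ^ 2 < #s) :
    P {ω | 1 / #s * ∑ i ∈ s, X i ω ^ 2 < σ ^ 2 + 2 * σ ^ 2 / √(δ * #s)}
      ≤ ENNReal.ofReal (δ / 2) := by
  have h := meas_le_abs_mean_sq_sub_le hs hlaw hc hindep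
    (sub_pos.2 (two_mul_sq_div_sqrt_lt hσ hE hδ hK₀))
  rw [coe_toNNReal _ (sq_nonneg σ)] at h
  refine (measure_mono ?_).trans
    (h.trans (ENNReal.ofReal_le_ofReal (variance_div_sq_le_half hσ hE hδ hK₀)))
  intro ω (hω : _ < σ ^ 2 + 2 * σ ^ 2 / √(δ * #s))
  show E - 2 * σ ^ 2 / √(δ * #s) ≤ |_|
  exact le_abs.2 (.inr (by linarith))

end Detection

theorem one_bit_awgn_detection_general {Ω : Type*} [MeasurableSpace Ω] (P : Measure Ω)
    [IsProbabilityMeasure P] (σv EU δ : ℝ) (hσ : 0 < σv) (hE : 0 < EU)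
    (hδ0 : 0 < δ) (K : ℕ) (hK : 1 ≤ K)
    (u : ℕ → ℝ) (hu : ∀ n ∈ Finset.Icc 1 K, u n ^ 2 = EU)
    (v : ℕ → Ω → ℝ) (hvmeas : ∀ n, Measurable (v n))
    (hvindep : iIndepFun v P)
    (hvdist : ∀ n, Measure.map (v n) P = gaussianReal 0 ((σv ^ 2).toNNReal)) :
    P {ω | σv ^ 2 + 2 * σv ^ 2 / Real.sqrt (δ * K) ≤
        (1 / K) * ∑ n ∈ Finset.Icc 1 K, v n ω ^ 2} ≤ ENNReal.ofReal (δ / 2) ∧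
      (4 / (δ * (EU / σv ^ 2) ^ 2) * (1 + Real.sqrt (1 + 2 * (EU / σv ^ 2))) ^ 2 < (K : ℝ) →
        P {ω | (1 / K) * ∑ n ∈ Finset.Icc 1 K, (u n + v n ω) ^ 2 <
            σv ^ 2 + 2 * σv ^ 2 / Real.sqrt (δ * K)} ≤ ENNReal.ofReal (δ / 2)) ∧
      (4 / (δ * (EU / σv ^ 2) ^ 2) * (1 + Real.sqrt (1 + 2 * (EU / σv ^ 2))) ^ 2 < (K : ℝ) →
        P {ω | σv ^ 2 + 2 * σv ^ 2 / Real.sqrt (δ * K) ≤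
            (1 / K) * ∑ n ∈ Finset.Icc 1 K, v n ω ^ 2} +
          P {ω | (1 / K) * ∑ n ∈ Finset.Icc 1 K, (u n + v n ω) ^ 2 <
            σv ^ 2 + 2 * σv ^ 2 / Real.sqrt (δ * K)} ≤ ENNReal.ofReal δ) := by
  have hcard : #(Finset.Icc 1 K) = K := by simp
  have hs : (Finset.Icc 1 K).Nonempty := Finset.nonempty_Icc.2 hK
  have hnoise (n : ℕ) : HasLaw (v n) (gaussianReal 0 (σv ^ 2).toNNReal) P :=
    ⟨(hvmeas n).aemeasurable, hvdist n⟩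
  have hα := hcard ▸ false_alarm_le hs (fun n _ => hnoise n)
    (fun i _ j _ hij => hvindep.indepFun hij) hσ hδ0
  have hβ (hK₀ : 4 / (δ * (EU / σv ^ 2) ^ 2) * (1 + √(1 + 2 * (EU / σv ^ 2))) ^ 2 < K) :=
    hcard ▸ missed_detection_le hs (X := fun n ω => u n + v n ω)
      (fun n _ => by simpa using gaussianReal_const_add (hnoise n) (u n)) hu
      (fun i _ j _ hij => (hvindep.indepFun hij).comp (measurable_const_add (u i))
        (measurable_const_add (u j))) hσ hE hδ0 (by rwa [hcard])
  refine ⟨hα, hβ, fun hK₀ => (add_le_add hα (hβ hK₀)).trans_eq ?_⟩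
  rw [← ENNReal.ofReal_add (by positivity) (by positivity), add_halves]

/-- Energy detection of the one-bit controller through an AWGN channel:
with per-sample control energy `u_n² = E_U`, i.i.d. noise `v_n ~ N(0, σ_v²)`, threshold
`t = 2σ_v²/√(δK)`, the false alarm `α = P((1/K)∑v_n² ≥ σ_v² + t)` satisfies `α ≤ δ/2`, and
if `K > K₀(δ) = (4/(δ·SNR²))(1 + √(1+2·SNR))²` with `SNR = E_U/σ_v²` then the missed
detection `β = P((1/K)∑(u_n+v_n)² < σ_v² + t)` satisfies `β ≤ δ/2`; hence `α + β ≤ δ`,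
i.e. Willie achieves `(1-δ)`-detection. -/
theorem one_bit_awgn_detection {Ω : Type*} [MeasurableSpace Ω] (P : Measure Ω)
    [IsProbabilityMeasure P] (σv EU δ : ℝ) (hσ : 0 < σv) (hE : 0 < EU)
    (hδ0 : 0 < δ) (hδ1 : δ < 1) (K : ℕ) (hK : 1 ≤ K)
    (u : ℕ → ℝ) (hu : ∀ n ∈ Finset.Icc 1 K, u n ^ 2 = EU)
    (v : ℕ → Ω → ℝ) (hvmeas : ∀ n, Measurable (v n))
    (hvindep : iIndepFun v P)
    (hvdist : ∀ n, Measure.map (v n) P = gaussianReal 0 ((σv ^ 2).toNNReal)) :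
    P {ω | σv ^ 2 + 2 * σv ^ 2 / Real.sqrt (δ * K) ≤
        (1 / K) * ∑ n ∈ Finset.Icc 1 K, v n ω ^ 2} ≤ ENNReal.ofReal (δ / 2) ∧
      (4 / (δ * (EU / σv ^ 2) ^ 2) * (1 + Real.sqrt (1 + 2 * (EU / σv ^ 2))) ^ 2 < (K : ℝ) →
        P {ω | (1 / K) * ∑ n ∈ Finset.Icc 1 K, (u n + v n ω) ^ 2 <
            σv ^ 2 + 2 * σv ^ 2 / Real.sqrt (δ * K)} ≤ ENNReal.ofReal (δ / 2)) ∧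
      (4 / (δ * (EU / σv ^ 2) ^ 2) * (1 + Real.sqrt (1 + 2 * (EU / σv ^ 2))) ^ 2 < (K : ℝ) →
        P {ω | σv ^ 2 + 2 * σv ^ 2 / Real.sqrt (δ * K) ≤
            (1 / K) * ∑ n ∈ Finset.Icc 1 K, v n ω ^ 2} +
          P {ω | (1 / K) * ∑ n ∈ Finset.Icc 1 K, (u n + v n ω) ^ 2 <
            σv ^ 2 + 2 * σv ^ 2 / Real.sqrt (δ * K)} ≤ ENNReal.ofReal δ) :=
  one_bit_awgn_detection_general P σv EU δ hσ hE hδ0 K hK u hu v hvmeas hvindep hvdist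
end

section
/- Let σ_Z > 0, 0 < δ < 1, and let q > 0 satisfy P(G > q) = (1 − δ/2)/2 where G is a standard Gaussian. Let a ∈ ℝ with |a| < 1 and a² ≥ 1 − q²/(2·log(2/δ)). Set the threshold t = σ_Z²·q²/(1 − a²). Then for X₀ ~ N(0, σ_Z²/(1 − a²)) and X₁ ~ N(0, σ_Z²), the error probabilities of the test that declares 'controlled' when the observed value x satisfies x² ≤ t obey α = P( X₀² ≤ t ) ≤ δ/2 and β = P( X₁² > t ) ≤ δ/2; hence α + β ≤ δ, i.e. Willie achieves (1−δ)-detection. -/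
/-!
After rescaling to the standard normal `G`, the false-alarm probability is exactly
`P(|G| ≤ q) = 1 - 2 Q(q) = δ/2`, and the missed-detection probability is `P(|G| > r)` with
`r² = q² / (1 - a²) ≥ 2 log (2/δ)`. The tail bound `Q(r) ≤ e^{-r²/2} / 2` makes the latter at
most `e^{-r²/2} ≤ δ/2`.
-/

open MeasureTheory ProbabilityTheory Real Set
open scoped ENNReal NNReal

namespace ProbabilityTheory

lemma gaussianReal_zero_Iio_neg (v : ℝ≥0) (r : ℝ) :
    gaussianReal 0 v (Iio (-r)) = gaussianReal 0 v (Ioi r) := by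
  conv_lhs => rw [← neg_zero, ← gaussianReal_map_neg]
  rw [Measure.map_apply measurable_neg measurableSet_Iio]
  congr 1
  ext x
  simp

lemma gaussianReal_Ioi_self (μ : ℝ) {v : ℝ≥0} (hv : v ≠ 0) :
    gaussianReal μ v (Ioi μ) = 1 / 2 := by
  have hshift : gaussianReal μ v (Ioi μ) = gaussianReal 0 v (Ioi 0) := by
    have hmap : gaussianReal μ v = (gaussianReal 0 v).map (μ + ·) := by
      rw [gaussianReal_map_const_add, zero_add]
    rw [hmap, Measure.map_apply (measurable_const_add μ) measurableSet_Ioi]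
    congr 1
    ext x
    simp
  have := nullSingletonClass_gaussianReal (μ := 0) hv
  have hsplit : gaussianReal 0 v (Iio 0) + gaussianReal 0 v (Ioi 0) = 1 := by
    rw [← measure_union Iio_disjoint_Ioi_same measurableSet_Ioi, Iio_union_Ioi,
      prob_compl_eq_one_sub (measurableSet_singleton 0), measure_singleton, tsub_zero]
  have hsymm : gaussianReal 0 v (Iio 0) = gaussianReal 0 v (Ioi 0) := by
    simpa using gaussianReal_zero_Iio_neg v 0
  rw [hshift, ENNReal.eq_div_iff two_ne_zero ENNReal.ofNat_ne_top, two_mul, ← hsplit, hsymm]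

lemma gaussianReal_zero_one_Ioi_le {r : ℝ} (hr : 0 ≤ r) :
    gaussianReal 0 1 (Ioi r) ≤ ENNReal.ofReal (exp (-r ^ 2 / 2) / 2) := by
  -- On `(r, ∞)` we have `x² ≥ r² + (x - r)²`, so the standard density is at most `e^{-r²/2}`
  -- times the density of `N(r, 1)`, which gives mass `1/2` to `(r, ∞)`.
  have hpdf : ∀ x ∈ Ioi r,
      gaussianPDF 0 1 x ≤ ENNReal.ofReal (exp (-r ^ 2 / 2)) * gaussianPDF r 1 x := by
    intro x hx
    rw [gaussianPDF, gaussianPDF, ← ENNReal.ofReal_mul (exp_nonneg _)]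
    refine ENNReal.ofReal_le_ofReal ?_
    simp only [gaussianPDFReal, NNReal.coe_one, mul_one, sub_zero]
    rw [mul_left_comm, ← exp_add]
    gcongr
    nlinarith [mul_nonneg hr (sub_nonneg.2 hx.le)]
  calc gaussianReal 0 1 (Ioi r) = ∫⁻ x in Ioi r, gaussianPDF 0 1 x :=
        gaussianReal_apply 0 one_ne_zero _
    _ ≤ ∫⁻ x in Ioi r, ENNReal.ofReal (exp (-r ^ 2 / 2)) * gaussianPDF r 1 x :=
        setLIntegral_mono (by fun_prop) hpdf
    _ = ENNReal.ofReal (exp (-r ^ 2 / 2)) * gaussianReal r 1 (Ioi r) := by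
        rw [lintegral_const_mul _ (measurable_gaussianPDF r 1), gaussianReal_apply r one_ne_zero]
    _ = ENNReal.ofReal (exp (-r ^ 2 / 2) / 2) := by
        rw [gaussianReal_Ioi_self r one_ne_zero, ENNReal.ofReal_div_of_pos two_pos,
          ENNReal.ofReal_ofNat, mul_one_div]

lemma gaussianReal_zero_one_map_sqrt_mul (v : ℝ≥0) :
    (gaussianReal 0 1).map (√v * ·) = gaussianReal 0 v := by
  rw [gaussianReal_map_const_mul, mul_zero, mul_one]
  congr 1
  exact NNReal.eq (by simp)

lemma gaussianReal_zero_Ioi_sqrt_mul {v : ℝ≥0} (hv : v ≠ 0) (r : ℝ) :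
    gaussianReal 0 v (Ioi (√v * r)) = gaussianReal 0 1 (Ioi r) := by
  have hsqrt : 0 < √(v : ℝ) := sqrt_pos.2 (by positivity)
  rw [← gaussianReal_zero_one_map_sqrt_mul, Measure.map_apply (measurable_const_mul _)
    measurableSet_Ioi]
  congr 1
  ext x
  simp [mul_lt_mul_iff_right₀ hsqrt]

lemma gaussianReal_zero_lt_abs (v : ℝ≥0) {r : ℝ} (hr : 0 ≤ r) :
    gaussianReal 0 v {x | r < |x|} = 2 * gaussianReal 0 v (Ioi r) := by
  have hunion : {x : ℝ | r < |x|} = Iio (-r) ∪ Ioi r := by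
    ext x
    simp [lt_abs, lt_neg, or_comm]
  have hdisj : Disjoint (Iio (-r)) (Ioi r) :=
    disjoint_left.2 fun x h h' => by simp only [mem_Iio, mem_Ioi] at h h'; linarith
  rw [hunion, measure_union hdisj measurableSet_Ioi, gaussianReal_zero_Iio_neg, two_mul]

lemma gaussianReal_zero_abs_le (v : ℝ≥0) {r : ℝ} (hr : 0 ≤ r) :
    gaussianReal 0 v {x | |x| ≤ r} = 1 - 2 * gaussianReal 0 v (Ioi r) := by
  rw [← gaussianReal_zero_lt_abs v hr,
    ← prob_compl_eq_one_sub (measurableSet_lt measurable_const measurable_abs)]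
  congr 1
  ext x
  simp

lemma gaussianReal_zero_sq_le_mul_sq {v : ℝ≥0} (hv : v ≠ 0) {q : ℝ} (hq : 0 ≤ q) :
    gaussianReal 0 v {x | x ^ 2 ≤ v * q ^ 2} = 1 - 2 * gaussianReal 0 1 (Ioi q) := by
  have hset : {x : ℝ | x ^ 2 ≤ v * q ^ 2} = {x | |x| ≤ √v * q} := by
    ext x
    rw [mem_ofPred, mem_ofPred, ← sq_le_sq₀ (abs_nonneg x) (by positivity), sq_abs, mul_pow,
      sq_sqrt v.coe_nonneg]
  rw [hset, gaussianReal_zero_abs_le v (by positivity), gaussianReal_zero_Ioi_sqrt_mul hv]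

lemma gaussianReal_zero_mul_sq_lt_sq_le {v : ℝ≥0} (hv : v ≠ 0) {r : ℝ} (hr : 0 ≤ r) :
    gaussianReal 0 v {x | v * r ^ 2 < x ^ 2} ≤ ENNReal.ofReal (exp (-r ^ 2 / 2)) := by
  have hset : {x : ℝ | v * r ^ 2 < x ^ 2} = {x | √v * r < |x|} := by
    ext x
    rw [mem_ofPred, mem_ofPred, ← sq_lt_sq₀ (by positivity) (abs_nonneg x), sq_abs, mul_pow,
      sq_sqrt v.coe_nonneg]
  rw [hset, gaussianReal_zero_lt_abs v (by positivity), gaussianReal_zero_Ioi_sqrt_mul hv]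
  calc 2 * gaussianReal 0 1 (Ioi r) ≤ 2 * ENNReal.ofReal (exp (-r ^ 2 / 2) / 2) := by
        gcongr
        exact gaussianReal_zero_one_Ioi_le hr
    _ = ENNReal.ofReal (exp (-r ^ 2 / 2)) := by
        rw [← ENNReal.ofReal_ofNat 2, ← ENNReal.ofReal_mul zero_le_two,
          mul_div_cancel₀ _ two_ne_zero]

end ProbabilityTheory

lemma exp_neg_sq_div_two_le_half {δ r : ℝ} (hδ : 0 < δ) (hr : 2 * log (2 / δ) ≤ r ^ 2) :
    exp (-r ^ 2 / 2) ≤ δ / 2 :=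
  calc exp (-r ^ 2 / 2) ≤ exp (-log (2 / δ)) := exp_le_exp.2 (by linarith)
    _ = δ / 2 := by rw [exp_neg, exp_log (by positivity), inv_div]

/-- Converse for the threshold (reset) controller: Willie observes
`X_{τ+1}`, which is `N(0, σ_Z²/(1-a²))` if no reset occurred and `N(0, σ_Z²)` if the system
was reset.  With `q = Q⁻¹((1-δ/2)/2)`, `a² ≥ 1 - q²/(2 log(2/δ))`, `|a| < 1`, and threshold
`t = σ_Z² q²/(1-a²)`, the test declaring `controlled` when `x² ≤ t` has
`α = P(X₀² ≤ t) ≤ δ/2` and `β = P(X₁² > t) ≤ δ/2`, hence `α + β ≤ δ`: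
Willie achieves `(1-δ)`-detection. -/
theorem threshold_controller_converse (σZ δ q a : ℝ) (hσ : 0 < σZ)
    (hδ0 : 0 < δ) (hδ1 : δ < 1) (hq : 0 < q)
    (hq2 : gaussianReal 0 1 (Set.Ioi q) = ENNReal.ofReal ((1 - δ / 2) / 2))
    (ha1 : |a| < 1) (ha2 : 1 - q ^ 2 / (2 * Real.log (2 / δ)) ≤ a ^ 2) :
    gaussianReal 0 ((σZ ^ 2 / (1 - a ^ 2)).toNNReal)
        {x : ℝ | x ^ 2 ≤ σZ ^ 2 * q ^ 2 / (1 - a ^ 2)} ≤ ENNReal.ofReal (δ / 2) ∧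
      gaussianReal 0 ((σZ ^ 2).toNNReal)
        {x : ℝ | σZ ^ 2 * q ^ 2 / (1 - a ^ 2) < x ^ 2} ≤ ENNReal.ofReal (δ / 2) ∧
      gaussianReal 0 ((σZ ^ 2 / (1 - a ^ 2)).toNNReal)
          {x : ℝ | x ^ 2 ≤ σZ ^ 2 * q ^ 2 / (1 - a ^ 2)} +
        gaussianReal 0 ((σZ ^ 2).toNNReal)
          {x : ℝ | σZ ^ 2 * q ^ 2 / (1 - a ^ 2) < x ^ 2} ≤ ENNReal.ofReal δ := by
  have h1a : 0 < 1 - a ^ 2 := by nlinarith [sq_abs a, abs_nonneg a]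
  obtain ⟨r, hr, hr2⟩ : ∃ r : ℝ, 0 ≤ r ∧ r ^ 2 = q ^ 2 / (1 - a ^ 2) :=
    ⟨q / √(1 - a ^ 2), by positivity, by rw [div_pow, sq_sqrt h1a.le]⟩
  have hα : gaussianReal 0 ((σZ ^ 2 / (1 - a ^ 2)).toNNReal)
      {x : ℝ | x ^ 2 ≤ σZ ^ 2 * q ^ 2 / (1 - a ^ 2)} = ENNReal.ofReal (δ / 2) := by
    have hvar : σZ ^ 2 * q ^ 2 / (1 - a ^ 2) = (σZ ^ 2 / (1 - a ^ 2)).toNNReal * q ^ 2 := by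
      rw [coe_toNNReal _ (by positivity)]
      ring
    rw [hvar, gaussianReal_zero_sq_le_mul_sq (by positivity) hq.le, hq2,
      ← ENNReal.ofReal_ofNat 2, ← ENNReal.ofReal_mul zero_le_two, ← ENNReal.ofReal_one,
      ← ENNReal.ofReal_sub _ (by linarith)]
    ring_nf
  have hβ : gaussianReal 0 ((σZ ^ 2).toNNReal)
      {x : ℝ | σZ ^ 2 * q ^ 2 / (1 - a ^ 2) < x ^ 2} ≤ ENNReal.ofReal (δ / 2) := by
    have hvar : σZ ^ 2 * q ^ 2 / (1 - a ^ 2) = (σZ ^ 2).toNNReal * r ^ 2 := by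
      rw [coe_toNNReal _ (sq_nonneg σZ), hr2]
      ring
    have hlog : 2 * log (2 / δ) ≤ r ^ 2 := by
      have hL : 0 < log (2 / δ) := log_pos (by rw [lt_div_iff₀ hδ0]; linarith)
      rw [hr2, le_div_iff₀ h1a]
      have := (le_div_iff₀ (by positivity : 0 < 2 * log (2 / δ))).1 (sub_le_comm.1 ha2)
      linarith
    rw [hvar]
    exact (gaussianReal_zero_mul_sq_lt_sq_le (by positivity) hr).trans
      (ENNReal.ofReal_le_ofReal (exp_neg_sq_div_two_le_half hδ0 hlog))
  refine ⟨hα.le, hβ, (add_le_add hα.le hβ).trans_eq ?_⟩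
  rw [← ENNReal.ofReal_add (by positivity) (by positivity), add_halves]
end
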